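/- arXiv:2411.03963 — 4 statements merged into one kernel-verified Lean document; each statement's English description precedes it below -/
import Mathlib

section
/- Let U and Y be complex Hilbert spaces, L : U → Y a bounded linear operator, α > 0, Λ := α·I_U + L*L (bijective with bounded inverse), and let S : Y → Y be a bounded linear operator that is isometric: ‖Sx‖ = ‖x‖ for all x ∈ Y. Define P := S* ∘ (I_Y − L Λ⁻¹ L*) ∘ S. Then Re⟨P x, x⟩ ≥ (1 + α⁻¹‖L‖²)⁻² ‖x‖² for every x ∈ Y, and P is bijective with bounded inverse. -/
/-!
Put `M = I − L Λ⁻¹ L*`. For `y ∈ Y`, `u = Λ⁻¹ L* y` solves the normal equation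
`α u + L* L u = L* y`, so `L* (M y) = α u`. Splitting `y = M y + L u` gives
`Re ⟪M y, y⟫ = ‖M y‖² + α ‖u‖² ≥ ‖M y‖²`, and `α ‖u‖ ≤ ‖L‖ ‖M y‖` gives
`‖y‖ ≤ (1 + α⁻¹ ‖L‖²) ‖M y‖`; together `M` is coercive with constant `(1 + α⁻¹ ‖L‖²)⁻²`.
Conjugating by the isometry `S` preserves coercivity, and a coercive operator on a Hilbert space
is invertible (Lax–Milgram): it is bounded below, hence injective with closed range, and a vector
orthogonal to the range is orthogonal to its own image, hence zero.
-/

open ContinuousLinearMap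

section Coercive

variable {𝕜 E : Type*} [RCLike 𝕜] [NormedAddCommGroup E] [InnerProductSpace 𝕜 E]

lemma mul_norm_le_norm_apply_of_coercive {T : E →L[𝕜] E} {c : ℝ}
    (hT : ∀ x, c * ‖x‖ ^ 2 ≤ RCLike.re (inner 𝕜 (T x) x)) (x : E) : c * ‖x‖ ≤ ‖T x‖ := by
  rcases (norm_nonneg x).eq_or_lt with hx | hx
  · simp [← hx]
  · refine le_of_mul_le_mul_right ?_ hx
    calc c * ‖x‖ * ‖x‖ = c * ‖x‖ ^ 2 := by ring
      _ ≤ RCLike.re (inner 𝕜 (T x) x) := hT x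
      _ ≤ ‖T x‖ * ‖x‖ := re_inner_le_norm _ _

lemma isUnit_of_coercive [CompleteSpace E] {T : E →L[𝕜] E} {c : ℝ} (hc : 0 < c)
    (hT : ∀ x, c * ‖x‖ ^ 2 ≤ RCLike.re (inner 𝕜 (T x) x)) : IsUnit T := by
  have hanti : AntilipschitzWith ⟨c⁻¹, (inv_pos.mpr hc).le⟩ T :=
    T.antilipschitz_of_bound fun x => by
      change ‖x‖ ≤ c⁻¹ * ‖T x‖
      rw [← div_eq_inv_mul, le_div_iff₀' hc]
      exact mul_norm_le_norm_apply_of_coercive hT x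
  have : CompleteSpace T.range :=
    (hanti.isClosed_range T.uniformContinuous).completeSpace_coe
  have hrange : T.range = ⊤ := by
    rw [← Submodule.orthogonal_eq_bot_iff, Submodule.eq_bot_iff]
    intro y hy
    have hTy : inner 𝕜 (T y) y = 0 :=
      (Submodule.mem_orthogonal _ y).mp hy (T y) (LinearMap.mem_range_self _ y)
    have hy_le := hT y
    rw [hTy, map_zero] at hy_le
    exact norm_eq_zero.mp (pow_eq_zero_iff two_ne_zero |>.mp
      (le_antisymm (nonpos_of_mul_nonpos_right hy_le hc) (by positivity)))
  exact T.isUnit_iff_bijective.mpr ⟨hanti.injective, LinearMap.range_eq_top.mp hrange⟩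

end Coercive

section Tikhonov

variable {𝕜 U Y : Type*} [RCLike 𝕜]
  [NormedAddCommGroup U] [InnerProductSpace 𝕜 U] [CompleteSpace U]
  [NormedAddCommGroup Y] [InnerProductSpace 𝕜 Y] [CompleteSpace Y]
  {L : U →L[𝕜] Y} {α : ℝ} {u : U} {y : Y}

local notation "L†" => ContinuousLinearMap.adjoint L

lemma adjoint_apply_sub_eq_smul (hu : (α : 𝕜) • u + L† (L u) = L† y) :
    L† (y - L u) = (α : 𝕜) • u := by
  rw [map_sub, ← hu, add_sub_cancel_right]

lemma re_inner_sub_apply_self (hu : (α : 𝕜) • u + L† (L u) = L† y) :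
    RCLike.re (inner 𝕜 (y - L u) y) = ‖y - L u‖ ^ 2 + α * ‖u‖ ^ 2 := by
  have hcross : inner 𝕜 (y - L u) (L u) = ((α * ‖u‖ ^ 2 : ℝ) : 𝕜) := by
    rw [← adjoint_inner_left, adjoint_apply_sub_eq_smul hu, inner_smul_left,
      inner_self_eq_norm_sq_to_K, RCLike.conj_ofReal]
    push_cast; ring
  calc RCLike.re (inner 𝕜 (y - L u) y)
      = RCLike.re (inner 𝕜 (y - L u) ((y - L u) + L u)) := by rw [sub_add_cancel]
    _ = ‖y - L u‖ ^ 2 + α * ‖u‖ ^ 2 := by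
      rw [inner_add_right, hcross, inner_self_eq_norm_sq_to_K]
      simp only [map_add, RCLike.ofReal_re]
      norm_cast

lemma norm_le_mul_norm_sub (hα : 0 < α) (hu : (α : 𝕜) • u + L† (L u) = L† y) :
    ‖y‖ ≤ (1 + α⁻¹ * ‖L‖ ^ 2) * ‖y - L u‖ := by
  have hαu : α * ‖u‖ ≤ ‖L‖ * ‖y - L u‖ := by
    calc α * ‖u‖ = ‖L† (y - L u)‖ := by
          rw [adjoint_apply_sub_eq_smul hu, norm_smul, RCLike.norm_ofReal, abs_of_pos hα]
      _ ≤ ‖L†‖ * ‖y - L u‖ := le_opNorm _ _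
      _ = ‖L‖ * ‖y - L u‖ := by rw [adjoint.norm_map]
  have hu_le : ‖u‖ ≤ α⁻¹ * (‖L‖ * ‖y - L u‖) := by
    rw [← div_eq_inv_mul, le_div_iff₀' hα]; exact hαu
  calc ‖y‖ = ‖(y - L u) + L u‖ := by rw [sub_add_cancel]
    _ ≤ ‖y - L u‖ + ‖L‖ * ‖u‖ := (norm_add_le _ _).trans (by gcongr; exact L.le_opNorm u)
    _ ≤ ‖y - L u‖ + ‖L‖ * (α⁻¹ * (‖L‖ * ‖y - L u‖)) := by gcongr
    _ = (1 + α⁻¹ * ‖L‖ ^ 2) * ‖y - L u‖ := by ring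

lemma coercive_one_sub_comp_comp_adjoint {Λinv : U →L[𝕜] U} (hα : 0 < α)
    (hΛinv : ((α : 𝕜) • (1 : U →L[𝕜] U) + L†.comp L).comp Λinv = 1) (y : Y) :
    ((1 + α⁻¹ * ‖L‖ ^ 2) ^ 2)⁻¹ * ‖y‖ ^ 2 ≤
      RCLike.re (inner 𝕜 ((1 - L.comp (Λinv.comp L†)) y) y) := by
  set u := Λinv (L† y)
  have hu : (α : 𝕜) • u + L† (L u) = L† y := by
    simpa using congr($hΛinv (L† y))
  have hy : (1 - L.comp (Λinv.comp L†)) y = y - L u := rfl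
  rw [hy, re_inner_sub_apply_self hu, inv_mul_le_iff₀ (by positivity)]
  calc ‖y‖ ^ 2 ≤ ((1 + α⁻¹ * ‖L‖ ^ 2) * ‖y - L u‖) ^ 2 := by
        gcongr; exact norm_le_mul_norm_sub hα hu
    _ ≤ (1 + α⁻¹ * ‖L‖ ^ 2) ^ 2 * (‖y - L u‖ ^ 2 + α * ‖u‖ ^ 2) := by
        rw [mul_pow]; gcongr; nlinarith [sq_nonneg ‖u‖]

end Tikhonov

lemma coercive_adjoint_comp_comp_of_isometry {𝕜 E : Type*} [RCLike 𝕜] [NormedAddCommGroup E]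
    [InnerProductSpace 𝕜 E] [CompleteSpace E] {T S : E →L[𝕜] E} {c : ℝ}
    (hT : ∀ y, c * ‖y‖ ^ 2 ≤ RCLike.re (inner 𝕜 (T y) y)) (hS : ∀ x, ‖S x‖ = ‖x‖) (x : E) :
    c * ‖x‖ ^ 2 ≤ RCLike.re (inner 𝕜 (((adjoint S).comp T).comp S x) x) := by
  rw [comp_apply, comp_apply, adjoint_inner_left, ← hS x]
  exact hT (S x)

theorem stmt13_general
    {U Y : Type*}
    [NormedAddCommGroup U] [InnerProductSpace ℂ U] [CompleteSpace U]
    [NormedAddCommGroup Y] [InnerProductSpace ℂ Y] [CompleteSpace Y]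
    (L : U →L[ℂ] Y) (α : ℝ) (hα : 0 < α)
    (Λ Λinv : U →L[ℂ] U)
    (hΛ : Λ = (α : ℂ) • (1 : U →L[ℂ] U) + (ContinuousLinearMap.adjoint L).comp L)
    (hinv₂ : Λ.comp Λinv = 1)
    (S : Y →L[ℂ] Y) (hS : ∀ x : Y, ‖S x‖ = ‖x‖)
    (P : Y →L[ℂ] Y)
    (hP : P = ((ContinuousLinearMap.adjoint S).comp
      (((1 : Y →L[ℂ] Y) -
        L.comp (Λinv.comp (ContinuousLinearMap.adjoint L))))).comp S) :
    (∀ x : Y, ((1 + α⁻¹ * ‖L‖ ^ 2) ^ 2)⁻¹ * ‖x‖ ^ 2 ≤ (inner ℂ (P x) x : ℂ).re) ∧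
    ∃ Pinv : Y →L[ℂ] Y, Pinv.comp P = 1 ∧ P.comp Pinv = 1 := by
  subst hΛ hP
  have hcoercive := coercive_adjoint_comp_comp_of_isometry
    (coercive_one_sub_comp_comp_adjoint hα hinv₂) hS
  obtain ⟨e, he⟩ := isUnit_of_coercive (by positivity) hcoercive
  exact ⟨hcoercive, ↑e⁻¹, he ▸ e.inv_mul, he ▸ e.mul_inv⟩

/-- With `Λ = α·I + L*L` (with bounded inverse `Λinv`), an isometric
bounded operator `S` on `Y`, and `P = S* (I − L Λ⁻¹ L*) S`, one has the coercivity
estimate `Re⟪Px, x⟫ ≥ (1 + α⁻¹‖L‖²)⁻² ‖x‖²` for every `x ∈ Y`, and `P` is bijective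
with bounded inverse. -/
theorem stmt13
    {U Y : Type*}
    [NormedAddCommGroup U] [InnerProductSpace ℂ U] [CompleteSpace U]
    [NormedAddCommGroup Y] [InnerProductSpace ℂ Y] [CompleteSpace Y]
    (L : U →L[ℂ] Y) (α : ℝ) (hα : 0 < α)
    (Λ Λinv : U →L[ℂ] U)
    (hΛ : Λ = (α : ℂ) • (1 : U →L[ℂ] U) + (ContinuousLinearMap.adjoint L).comp L)
    (hinv₁ : Λinv.comp Λ = 1) (hinv₂ : Λ.comp Λinv = 1)
    (S : Y →L[ℂ] Y) (hS : ∀ x : Y, ‖S x‖ = ‖x‖)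
    (P : Y →L[ℂ] Y)
    (hP : P = ((ContinuousLinearMap.adjoint S).comp
      (((1 : Y →L[ℂ] Y) -
        L.comp (Λinv.comp (ContinuousLinearMap.adjoint L))))).comp S) :
    (∀ x : Y, ((1 + α⁻¹ * ‖L‖ ^ 2) ^ 2)⁻¹ * ‖x‖ ^ 2 ≤ (inner ℂ (P x) x : ℂ).re) ∧
    ∃ Pinv : Y →L[ℂ] Y, Pinv.comp P = 1 ∧ P.comp Pinv = 1 :=
  stmt13_general L α hα Λ Λinv hΛ hinv₂ S hS P hP
end

section
/- Let U and Y be complex Hilbert spaces, L : U → Y a bounded linear operator, α > 0, and G, G_n : Y → Y (n ∈ ℕ) bounded linear operators such that G_n y → G y and G_n* y → G* y in Y for every y ∈ Y as n → ∞. Set Λ_n := α·I_U + L*G_n*G_n L and Λ_G := α·I_U + L*G*G L (each bijective with bounded inverse, with ‖Λ_n⁻¹‖ ≤ 1/α). Then for every h ∈ U one has Λ_n⁻¹ h → Λ_G⁻¹ h in U as n → ∞. -/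
open ContinuousLinearMap Filter Topology

/-
Write `u := Λ_G⁻¹ h`. Strong convergence of `G_n` and `G_n*` gives `G_n* G_n → G* G` strongly
(the `G_n*` are uniformly bounded by Banach–Steinhaus), hence `Λ_n u → Λ_G u = h`. Then
`Λ_n⁻¹ h - u = Λ_n⁻¹ (h - Λ_n u)` has norm at most `‖h - Λ_n u‖ / α`, which tends to `0`.
-/

section StrongConvergence

variable {𝕜 E F H : Type*} [NontriviallyNormedField 𝕜]
  [NormedAddCommGroup E] [NormedSpace 𝕜 E] [NormedAddCommGroup F] [NormedSpace 𝕜 F]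
  [NormedAddCommGroup H] [NormedSpace 𝕜 H]

theorem exists_norm_le_of_tendsto_apply [CompleteSpace E] {S : ℕ → E →L[𝕜] F} {S₀ : E →L[𝕜] F}
    (hS : ∀ x, Tendsto (fun n => S n x) atTop (𝓝 (S₀ x))) : ∃ C, ∀ n, ‖S n‖ ≤ C :=
  banach_steinhaus fun x =>
    let ⟨M, hM⟩ := (hS x).norm.bddAbove_range
    ⟨M, fun n => hM ⟨n, rfl⟩⟩

theorem tendsto_comp_apply_of_tendsto_apply [CompleteSpace F]
    {S : ℕ → F →L[𝕜] H} {S₀ : F →L[𝕜] H} {T : ℕ → E →L[𝕜] F} {T₀ : E →L[𝕜] F}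
    (hS : ∀ y, Tendsto (fun n => S n y) atTop (𝓝 (S₀ y)))
    (hT : ∀ x, Tendsto (fun n => T n x) atTop (𝓝 (T₀ x))) (x : E) :
    Tendsto (fun n => S n (T n x)) atTop (𝓝 (S₀ (T₀ x))) := by
  obtain ⟨C, hC⟩ := exists_norm_le_of_tendsto_apply hS
  rw [tendsto_iff_norm_sub_tendsto_zero]
  have hbound : Tendsto (fun n => C * ‖T n x - T₀ x‖ + ‖S n (T₀ x) - S₀ (T₀ x)‖) atTop (𝓝 0) := by
    simpa using ((tendsto_iff_norm_sub_tendsto_zero.mp (hT x)).const_mul C).add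
      (tendsto_iff_norm_sub_tendsto_zero.mp (hS (T₀ x)))
  refine squeeze_zero (fun _ => norm_nonneg _) (fun n => ?_) hbound
  calc ‖S n (T n x) - S₀ (T₀ x)‖
      = ‖S n (T n x - T₀ x) + (S n (T₀ x) - S₀ (T₀ x))‖ := by rw [map_sub]; abel_nf
    _ ≤ ‖S n‖ * ‖T n x - T₀ x‖ + ‖S n (T₀ x) - S₀ (T₀ x)‖ :=
        (norm_add_le _ _).trans (add_le_add_left (le_opNorm _ _) _)
    _ ≤ C * ‖T n x - T₀ x‖ + ‖S n (T₀ x) - S₀ (T₀ x)‖ := by gcongr; exact hC n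

theorem tendsto_apply_of_leftInverse {l : Filter ℕ} {B : ℕ → F →L[𝕜] E} {A : ℕ → E →L[𝕜] F}
    {C : ℝ} (hBA : ∀ n, (B n).comp (A n) = 1) (hB : ∀ n, ‖B n‖ ≤ C) {u : E} {h : F}
    (hA : Tendsto (fun n => A n u) l (𝓝 h)) : Tendsto (fun n => B n h) l (𝓝 u) := by
  rw [tendsto_iff_norm_sub_tendsto_zero]
  have hbound : Tendsto (fun n => C * ‖h - A n u‖) l (𝓝 0) := by
    simpa [norm_sub_rev] using (tendsto_iff_norm_sub_tendsto_zero.mp hA).const_mul C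
  refine squeeze_zero (fun _ => norm_nonneg _) (fun n => ?_) hbound
  have hBAu : B n (A n u) = u := by simpa using congrArg (· u) (hBA n)
  calc ‖B n h - u‖ = ‖B n (h - A n u)‖ := by rw [map_sub, hBAu]
    _ ≤ ‖B n‖ * ‖h - A n u‖ := le_opNorm _ _
    _ ≤ C * ‖h - A n u‖ := by gcongr; exact hB n

end StrongConvergence

theorem stmt14_general
    {U Y : Type*}
    [NormedAddCommGroup U] [InnerProductSpace ℂ U] [CompleteSpace U]
    [NormedAddCommGroup Y] [InnerProductSpace ℂ Y] [CompleteSpace Y]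
    (L : U →L[ℂ] Y) (α : ℝ)
    (G : Y →L[ℂ] Y) (Gn : ℕ → (Y →L[ℂ] Y))
    (hGn : ∀ y : Y, Tendsto (fun n => Gn n y) atTop (𝓝 (G y)))
    (hGnstar : ∀ y : Y, Tendsto
      (fun n => (ContinuousLinearMap.adjoint (Gn n)) y) atTop
      (𝓝 ((ContinuousLinearMap.adjoint G) y)))
    (Λn : ℕ → (U →L[ℂ] U)) (ΛG : U →L[ℂ] U)
    (hΛn : ∀ n : ℕ, Λn n = (α : ℂ) • (1 : U →L[ℂ] U) +
      ((ContinuousLinearMap.adjoint L).comp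
        ((ContinuousLinearMap.adjoint (Gn n)).comp ((Gn n).comp L))))
    (hΛG : ΛG = (α : ℂ) • (1 : U →L[ℂ] U) +
      ((ContinuousLinearMap.adjoint L).comp
        ((ContinuousLinearMap.adjoint G).comp (G.comp L))))
    (Λninv : ℕ → (U →L[ℂ] U)) (ΛGinv : U →L[ℂ] U)
    (hninv₁ : ∀ n : ℕ, (Λninv n).comp (Λn n) = 1)
    (hninvbd : ∀ n : ℕ, ‖Λninv n‖ ≤ 1 / α)
    (hGinv₂ : ΛG.comp ΛGinv = 1) :
    ∀ h : U, Tendsto (fun n => (Λninv n) h) atTop (𝓝 (ΛGinv h)) := by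
  intro h
  have hΛGu : ΛG (ΛGinv h) = h := by simpa using congrArg (· h) hGinv₂
  have hΛnu : Tendsto (fun n => Λn n (ΛGinv h)) atTop (𝓝 (ΛG (ΛGinv h))) := by
    have hGstarG := tendsto_comp_apply_of_tendsto_apply hGnstar hGn (L (ΛGinv h))
    simpa [hΛn, hΛG] using
      ((adjoint L).continuous.tendsto _ |>.comp hGstarG).const_add ((α : ℂ) • ΛGinv h)
  rw [hΛGu] at hΛnu
  exact tendsto_apply_of_leftInverse hninv₁ hninvbd hΛnu

/-- If `G_n → G` and `G_n* → G*` strongly on `Y`, and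
`Λ_n = α·I + L*G_n*G_nL`, `Λ_G = α·I + L*G*GL` have bounded inverses with
`‖Λ_n⁻¹‖ ≤ 1/α`, then `Λ_n⁻¹ h → Λ_G⁻¹ h` for every `h ∈ U`. -/
theorem stmt14
    {U Y : Type*}
    [NormedAddCommGroup U] [InnerProductSpace ℂ U] [CompleteSpace U]
    [NormedAddCommGroup Y] [InnerProductSpace ℂ Y] [CompleteSpace Y]
    (L : U →L[ℂ] Y) (α : ℝ) (hα : 0 < α)
    (G : Y →L[ℂ] Y) (Gn : ℕ → (Y →L[ℂ] Y))
    (hGn : ∀ y : Y, Tendsto (fun n => Gn n y) atTop (𝓝 (G y)))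
    (hGnstar : ∀ y : Y, Tendsto
      (fun n => (ContinuousLinearMap.adjoint (Gn n)) y) atTop
      (𝓝 ((ContinuousLinearMap.adjoint G) y)))
    (Λn : ℕ → (U →L[ℂ] U)) (ΛG : U →L[ℂ] U)
    (hΛn : ∀ n : ℕ, Λn n = (α : ℂ) • (1 : U →L[ℂ] U) +
      ((ContinuousLinearMap.adjoint L).comp
        ((ContinuousLinearMap.adjoint (Gn n)).comp ((Gn n).comp L))))
    (hΛG : ΛG = (α : ℂ) • (1 : U →L[ℂ] U) +
      ((ContinuousLinearMap.adjoint L).comp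
        ((ContinuousLinearMap.adjoint G).comp (G.comp L))))
    (Λninv : ℕ → (U →L[ℂ] U)) (ΛGinv : U →L[ℂ] U)
    (hninv₁ : ∀ n : ℕ, (Λninv n).comp (Λn n) = 1)
    (hninv₂ : ∀ n : ℕ, (Λn n).comp (Λninv n) = 1)
    (hninvbd : ∀ n : ℕ, ‖Λninv n‖ ≤ 1 / α)
    (hGinv₁ : ΛGinv.comp ΛG = 1) (hGinv₂ : ΛG.comp ΛGinv = 1)
    (hGinvbd : ‖ΛGinv‖ ≤ 1 / α) :
    ∀ h : U, Tendsto (fun n => (Λninv n) h) atTop (𝓝 (ΛGinv h)) :=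
  stmt14_general L α G Gn hGn hGnstar Λn ΛG hΛn hΛG Λninv ΛGinv hninv₁ hninvbd hGinv₂
end

section
/- Let U and Y be complex Hilbert spaces, L : U → Y a bounded linear operator, α > 0, v ∈ Y, and G, G_n : Y → Y (n ∈ ℕ) bounded linear operators such that G_n y → G y and G_n* y → G* y in Y for every y ∈ Y as n → ∞. With Λ_n := α·I_U + L*G_n*G_n L, Λ_G := α·I_U + L*G*G L, ĝ_n := −Λ_n⁻¹(L*G_n*G_n v), and ĝ := −Λ_G⁻¹(L*G*G v), one has ĝ_n → ĝ in U as n → ∞. -/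
/-!
`Λ_n ĝ_n = -L*G_n*G_n v` and `Λ_G ĝ = -L*G*G v`, and every `Λ_n` is bounded below by `α`
because `L*G_n*G_n L = (G_n L)*(G_n L)` is positive. Hence
`α ‖ĝ_n - ĝ‖ ≤ ‖Λ_n ĝ_n - Λ_n ĝ‖`, and the right-hand side tends to `‖Λ_G ĝ - Λ_G ĝ‖ = 0`
because `G_n* G_n → G* G` strongly: the `G_n*` are uniformly bounded by Banach–Steinhaus.
-/

open ContinuousLinearMap Filter Topology

section StrongConvergence

variable {𝕜 E F : Type*} [NontriviallyNormedField 𝕜]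
  [NormedAddCommGroup E] [NormedSpace 𝕜 E] [NormedAddCommGroup F] [NormedSpace 𝕜 F]

theorem tendsto_apply_of_tendsto_pointwise [CompleteSpace E] {B : ℕ → E →L[𝕜] F}
    {B₀ : E →L[𝕜] F} (hB : ∀ x, Tendsto (fun n => B n x) atTop (𝓝 (B₀ x)))
    {x : ℕ → E} {x₀ : E} (hx : Tendsto x atTop (𝓝 x₀)) :
    Tendsto (fun n => B n (x n)) atTop (𝓝 (B₀ x₀)) := by
  obtain ⟨C, hC⟩ := banach_steinhaus (g := B) fun y =>
    ⟨_, fun n => le_csSup (hB y).norm.bddAbove_range (Set.mem_range_self n)⟩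
  have hdiff : Tendsto (fun n => B n (x n - x₀)) atTop (𝓝 0) := by
    refine squeeze_zero_norm (fun n => ?_) (by simpa using (hx.sub_const x₀).norm.const_mul C)
    exact (B n).le_of_opNorm_le (hC n) _
  simpa using hdiff.add (hB x₀)

theorem tendsto_of_mul_norm_le_norm_apply {ι : Type*} {l : Filter ι} {A : ι → E →L[𝕜] F}
    {c : ℝ} (hc : 0 < c) (hA : ∀ i u, c * ‖u‖ ≤ ‖A i u‖) {x : ι → E} {x₀ : E} {y : F}
    (hAx₀ : Tendsto (fun i => A i x₀) l (𝓝 y)) (hAx : Tendsto (fun i => A i (x i)) l (𝓝 y)) :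
    Tendsto x l (𝓝 x₀) := by
  rw [tendsto_iff_norm_sub_tendsto_zero]
  refine squeeze_zero (fun _ => norm_nonneg _) (fun i => ?_)
    (by simpa using ((hAx.sub hAx₀).norm.const_mul c⁻¹))
  rw [le_inv_mul_iff₀ hc, ← map_sub]
  exact hA i _

end StrongConvergence

section Coercivity

variable {𝕜 E : Type*} [RCLike 𝕜] [NormedAddCommGroup E] [InnerProductSpace 𝕜 E]

theorem ContinuousLinearMap.IsPositive.mul_norm_le_norm_smul_one_add_apply {T : E →L[𝕜] E}
    (hT : T.IsPositive) (α : ℝ) (u : E) : α * ‖u‖ ≤ ‖((α : 𝕜) • (1 : E →L[𝕜] E) + T) u‖ := by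
  rcases (norm_nonneg u).eq_or_lt with hu | hu
  · simp [← hu]
  have hre : α * ‖u‖ ^ 2 ≤ RCLike.re (inner 𝕜 (((α : 𝕜) • (1 : E →L[𝕜] E) + T) u) u) := by
    simpa [inner_add_left, inner_smul_left, inner_self_eq_norm_sq, mul_comm] using
      hT.re_inner_nonneg_left u
  refine le_of_mul_le_mul_right ?_ hu
  calc α * ‖u‖ * ‖u‖ = α * ‖u‖ ^ 2 := by ring
    _ ≤ _ := hre.trans (re_inner_le_norm _ _)

theorem mul_norm_le_norm_smul_one_add_adjoint_comp_apply {F : Type*} [NormedAddCommGroup F]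
    [InnerProductSpace 𝕜 F] [CompleteSpace E] [CompleteSpace F] (L : E →L[𝕜] F)
    (G : F →L[𝕜] F) (α : ℝ) (u : E) :
    α * ‖u‖ ≤ ‖((α : 𝕜) • (1 : E →L[𝕜] E) + adjoint L ∘L (adjoint G ∘L (G ∘L L))) u‖ := by
  simpa [adjoint_comp, comp_assoc] using
    (isPositive_adjoint_comp_self (G ∘L L)).mul_norm_le_norm_smul_one_add_apply α u

end Coercivity

theorem stmt15_general
    {U Y : Type*}
    [NormedAddCommGroup U] [InnerProductSpace ℂ U] [CompleteSpace U]
    [NormedAddCommGroup Y] [InnerProductSpace ℂ Y] [CompleteSpace Y]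
    (L : U →L[ℂ] Y) (α : ℝ) (hα : 0 < α) (v : Y)
    (G : Y →L[ℂ] Y) (Gn : ℕ → (Y →L[ℂ] Y))
    (hGn : ∀ y : Y, Tendsto (fun n => Gn n y) atTop (𝓝 (G y)))
    (hGnstar : ∀ y : Y, Tendsto
      (fun n => (ContinuousLinearMap.adjoint (Gn n)) y) atTop
      (𝓝 ((ContinuousLinearMap.adjoint G) y)))
    (Λn : ℕ → (U →L[ℂ] U)) (ΛG : U →L[ℂ] U)
    (hΛn : ∀ n : ℕ, Λn n = (α : ℂ) • (1 : U →L[ℂ] U) +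
      ((ContinuousLinearMap.adjoint L).comp
        ((ContinuousLinearMap.adjoint (Gn n)).comp ((Gn n).comp L))))
    (hΛG : ΛG = (α : ℂ) • (1 : U →L[ℂ] U) +
      ((ContinuousLinearMap.adjoint L).comp
        ((ContinuousLinearMap.adjoint G).comp (G.comp L))))
    (Λninv : ℕ → (U →L[ℂ] U)) (ΛGinv : U →L[ℂ] U)
    (hninv₂ : ∀ n : ℕ, (Λn n).comp (Λninv n) = 1)
    (hGinv₂ : ΛG.comp ΛGinv = 1)
    (ghatn : ℕ → U) (ghat : U)
    (hghatn : ∀ n : ℕ, ghatn n = -(Λninv n) ((ContinuousLinearMap.adjoint L)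
      ((ContinuousLinearMap.adjoint (Gn n)) ((Gn n) v))))
    (hghat : ghat = -ΛGinv ((ContinuousLinearMap.adjoint L)
      ((ContinuousLinearMap.adjoint G) (G v)))) :
    Tendsto ghatn atTop (𝓝 ghat) := by
  have hgram : ∀ y, Tendsto (fun n => adjoint L (adjoint (Gn n) (Gn n y))) atTop
      (𝓝 (adjoint L (adjoint G (G y)))) := fun y =>
    ((adjoint L).continuous.tendsto _).comp (tendsto_apply_of_tendsto_pointwise hGnstar (hGn y))
  have hΛn_ghat : Tendsto (fun n => Λn n ghat) atTop (𝓝 (ΛG ghat)) := by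
    simp only [hΛn, hΛG, add_apply, comp_apply]
    exact (hgram (L ghat)).const_add _
  have hΛn_ghatn : ∀ n, Λn n (ghatn n) = -adjoint L (adjoint (Gn n) (Gn n v)) := fun n => by
    rw [hghatn n, map_neg, ← comp_apply, hninv₂ n, one_apply_eq_self]
  have hΛG_ghat : ΛG ghat = -adjoint L (adjoint G (G v)) := by
    rw [hghat, map_neg, ← comp_apply, hGinv₂, one_apply_eq_self]
  refine tendsto_of_mul_norm_le_norm_apply hα (fun n u => ?_) hΛn_ghat ?_
  · rw [hΛn n]
    exact mul_norm_le_norm_smul_one_add_adjoint_comp_apply L (Gn n) α u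
  · simpa only [hΛn_ghatn, hΛG_ghat] using (hgram v).neg

/-- If `G_n → G` and `G_n* → G*` strongly on `Y`, then the optimal
controls `ghat_n = −Λ_n⁻¹(L*G_n*G_n v)` converge in `U` to `ghat = −Λ_G⁻¹(L*G*G v)`,
where `Λ_n = α·I + L*G_n*G_nL` and `Λ_G = α·I + L*G*GL`. -/
theorem stmt15
    {U Y : Type*}
    [NormedAddCommGroup U] [InnerProductSpace ℂ U] [CompleteSpace U]
    [NormedAddCommGroup Y] [InnerProductSpace ℂ Y] [CompleteSpace Y]
    (L : U →L[ℂ] Y) (α : ℝ) (hα : 0 < α) (v : Y)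
    (G : Y →L[ℂ] Y) (Gn : ℕ → (Y →L[ℂ] Y))
    (hGn : ∀ y : Y, Tendsto (fun n => Gn n y) atTop (𝓝 (G y)))
    (hGnstar : ∀ y : Y, Tendsto
      (fun n => (ContinuousLinearMap.adjoint (Gn n)) y) atTop
      (𝓝 ((ContinuousLinearMap.adjoint G) y)))
    (Λn : ℕ → (U →L[ℂ] U)) (ΛG : U →L[ℂ] U)
    (hΛn : ∀ n : ℕ, Λn n = (α : ℂ) • (1 : U →L[ℂ] U) +
      ((ContinuousLinearMap.adjoint L).comp
        ((ContinuousLinearMap.adjoint (Gn n)).comp ((Gn n).comp L))))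
    (hΛG : ΛG = (α : ℂ) • (1 : U →L[ℂ] U) +
      ((ContinuousLinearMap.adjoint L).comp
        ((ContinuousLinearMap.adjoint G).comp (G.comp L))))
    (Λninv : ℕ → (U →L[ℂ] U)) (ΛGinv : U →L[ℂ] U)
    (hninv₁ : ∀ n : ℕ, (Λninv n).comp (Λn n) = 1)
    (hninv₂ : ∀ n : ℕ, (Λn n).comp (Λninv n) = 1)
    (hGinv₁ : ΛGinv.comp ΛG = 1) (hGinv₂ : ΛG.comp ΛGinv = 1)
    (ghatn : ℕ → U) (ghat : U)
    (hghatn : ∀ n : ℕ, ghatn n = -(Λninv n) ((ContinuousLinearMap.adjoint L)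
      ((ContinuousLinearMap.adjoint (Gn n)) ((Gn n) v))))
    (hghat : ghat = -ΛGinv ((ContinuousLinearMap.adjoint L)
      ((ContinuousLinearMap.adjoint G) (G v)))) :
    Tendsto ghatn atTop (𝓝 ghat) :=
  stmt15_general L α hα v G Gn hGn hGnstar Λn ΛG hΛn hΛG Λninv ΛGinv hninv₂ hGinv₂ ghatn ghat hghatn
    hghat
end

section
/- Let U and Y be complex Hilbert spaces, L : U → Y and S : Y → Y bounded linear operators, α > 0, and G, G_n : Y → Y (n ∈ ℕ) bounded linear operators such that G_n y → G y and G_n* y → G* y in Y for every y ∈ Y as n → ∞. Set Λ_n := α·I_U + L*G_n*G_n L, Λ_G := α·I_U + L*G*G L, P_n := S* ∘ G_n*G_n ∘ (I_Y − L Λ_n⁻¹ L* G_n*G_n) ∘ S, and P := S* ∘ G*G ∘ (I_Y − L Λ_G⁻¹ L* G*G) ∘ S. Then for every x ∈ Y one has P_n x → P x in Y as n → ∞. -/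
/-!
By Banach–Steinhaus a strongly convergent sequence of operators on a Banach space is uniformly
bounded, so strong convergence is preserved under composition; this gives `Λ_n → Λ_G` strongly.
Since `re ⟪u, Λ_n u⟫ ≥ α ‖u‖²`, the `Λ_n` are uniformly bounded below by `α`, and then
`Λ_n (Λ_n⁻¹ v - Λ_G⁻¹ v) = (Λ_G - Λ_n) Λ_G⁻¹ v` gives `Λ_n⁻¹ → Λ_G⁻¹` strongly.
Finally `P_n` is a composition of factors converging strongly to those of `P`.
-/

open ContinuousLinearMap Filter Topology

section StrongConvergence

variable {𝕜 E F G : Type*} [NontriviallyNormedField 𝕜]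
  [NormedAddCommGroup E] [NormedSpace 𝕜 E] [NormedAddCommGroup F] [NormedSpace 𝕜 F]
  [NormedAddCommGroup G] [NormedSpace 𝕜 G]

theorem tendsto_clm_apply_of_tendsto_pointwise [CompleteSpace E]
    {T : ℕ → E →L[𝕜] F} {T₀ : E →L[𝕜] F}
    (hT : ∀ x, Tendsto (fun n => T n x) atTop (𝓝 (T₀ x)))
    {y : ℕ → E} {y₀ : E} (hy : Tendsto y atTop (𝓝 y₀)) :
    Tendsto (fun n => T n (y n)) atTop (𝓝 (T₀ y₀)) := by
  obtain ⟨C, hC⟩ : ∃ C, ∀ n, ‖T n‖ ≤ C := banach_steinhaus fun x => by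
    obtain ⟨C, hC⟩ := (hT x).norm.bddAbove_range
    exact ⟨C, fun n => hC ⟨n, rfl⟩⟩
  have hbound : ∀ n, ‖T n (y n) - T₀ y₀‖ ≤ C * ‖y n - y₀‖ + ‖T n y₀ - T₀ y₀‖ := fun n =>
    calc ‖T n (y n) - T₀ y₀‖ = ‖T n (y n - y₀) + (T n y₀ - T₀ y₀)‖ := by
          rw [map_sub, sub_add_sub_cancel]
      _ ≤ ‖T n (y n - y₀)‖ + ‖T n y₀ - T₀ y₀‖ := norm_add_le _ _
      _ ≤ C * ‖y n - y₀‖ + ‖T n y₀ - T₀ y₀‖ := by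
          gcongr
          exact (T n).le_of_opNorm_le (hC n) _
  have hlim : Tendsto (fun n => C * ‖y n - y₀‖ + ‖T n y₀ - T₀ y₀‖) atTop (𝓝 0) := by
    simpa using ((tendsto_iff_norm_sub_tendsto_zero.mp hy).const_mul C).add
      (tendsto_iff_norm_sub_tendsto_zero.mp (hT y₀))
  exact tendsto_iff_norm_sub_tendsto_zero.mpr
    (squeeze_zero (fun n => norm_nonneg _) hbound hlim)

theorem tendsto_comp_apply_of_tendsto_pointwise [CompleteSpace F]
    {T : ℕ → F →L[𝕜] G} {T₀ : F →L[𝕜] G} {R : ℕ → E →L[𝕜] F} {R₀ : E →L[𝕜] F}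
    (hT : ∀ y, Tendsto (fun n => T n y) atTop (𝓝 (T₀ y)))
    (hR : ∀ x, Tendsto (fun n => R n x) atTop (𝓝 (R₀ x))) (x : E) :
    Tendsto (fun n => (T n ∘L R n) x) atTop (𝓝 ((T₀ ∘L R₀) x)) :=
  tendsto_clm_apply_of_tendsto_pointwise hT (hR x)

theorem tendsto_rightInverse_apply_of_tendsto_pointwise
    {T : ℕ → E →L[𝕜] F} {T₀ : E →L[𝕜] F} {R : ℕ → F →L[𝕜] E} {R₀ : F →L[𝕜] E}
    (hT : ∀ x, Tendsto (fun n => T n x) atTop (𝓝 (T₀ x)))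
    {c : ℝ} (hc : 0 < c) (hbelow : ∀ n u, c * ‖u‖ ≤ ‖T n u‖)
    (hR : ∀ n, T n ∘L R n = 1) (hR₀ : T₀ ∘L R₀ = 1) (v : F) :
    Tendsto (fun n => R n v) atTop (𝓝 (R₀ v)) := by
  have hbound : ∀ n, ‖R n v - R₀ v‖ ≤ c⁻¹ * ‖T₀ (R₀ v) - T n (R₀ v)‖ := fun n => by
    have hv : T n (R n v) = T₀ (R₀ v) := by
      rw [← comp_apply, hR, ← comp_apply, hR₀, one_apply_eq_self]
    rw [le_inv_mul_iff₀ hc, ← hv, ← map_sub]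
    exact hbelow n _
  have hlim : Tendsto (fun n => c⁻¹ * ‖T₀ (R₀ v) - T n (R₀ v)‖) atTop (𝓝 0) := by
    simpa [norm_sub_rev] using
      (tendsto_iff_norm_sub_tendsto_zero.mp (hT (R₀ v))).const_mul c⁻¹
  exact tendsto_iff_norm_sub_tendsto_zero.mpr
    (squeeze_zero (fun n => norm_nonneg _) hbound hlim)

end StrongConvergence

theorem mul_norm_le_norm_smul_one_add_adjoint_comp_self_apply
    {𝕜 U Y : Type*} [RCLike 𝕜]
    [NormedAddCommGroup U] [InnerProductSpace 𝕜 U] [CompleteSpace U]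
    [NormedAddCommGroup Y] [InnerProductSpace 𝕜 Y] [CompleteSpace Y]
    (α : ℝ) (M : U →L[𝕜] Y) (u : U) :
    α * ‖u‖ ≤ ‖((α : 𝕜) • (1 : U →L[𝕜] U) + adjoint M ∘L M) u‖ := by
  set Λ := (α : 𝕜) • (1 : U →L[𝕜] U) + adjoint M ∘L M
  have hre : RCLike.re (inner 𝕜 u (Λ u)) = α * ‖u‖ ^ 2 + ‖M u‖ ^ 2 := by
    simp only [Λ, add_apply, smul_apply, comp_apply, inner_add_right,
      inner_smul_right, adjoint_inner_right, map_add, inner_self_eq_norm_sq_to_K]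
    norm_cast
    simp
  have hcoercive : α * ‖u‖ ^ 2 ≤ ‖u‖ * ‖Λ u‖ :=
    calc α * ‖u‖ ^ 2 ≤ RCLike.re (inner 𝕜 u (Λ u)) := by rw [hre]; nlinarith [sq_nonneg ‖M u‖]
      _ ≤ ‖inner 𝕜 u (Λ u)‖ := RCLike.re_le_norm _
      _ ≤ ‖u‖ * ‖Λ u‖ := norm_inner_le_norm _ _
  rcases (norm_nonneg u).eq_or_lt with hu | hu
  · simp [← hu]
  · nlinarith
theorem stmt18_general
    {U Y : Type*}
    [NormedAddCommGroup U] [InnerProductSpace ℂ U] [CompleteSpace U]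
    [NormedAddCommGroup Y] [InnerProductSpace ℂ Y] [CompleteSpace Y]
    (L : U →L[ℂ] Y) (S : Y →L[ℂ] Y) (α : ℝ) (hα : 0 < α)
    (G : Y →L[ℂ] Y) (Gn : ℕ → (Y →L[ℂ] Y))
    (hGn : ∀ y : Y, Tendsto (fun n => Gn n y) atTop (𝓝 (G y)))
    (hGnstar : ∀ y : Y, Tendsto
      (fun n => (ContinuousLinearMap.adjoint (Gn n)) y) atTop
      (𝓝 ((ContinuousLinearMap.adjoint G) y)))
    (Λn : ℕ → (U →L[ℂ] U)) (ΛG : U →L[ℂ] U)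
    (hΛn : ∀ n : ℕ, Λn n = (α : ℂ) • (1 : U →L[ℂ] U) +
      ((ContinuousLinearMap.adjoint L).comp
        ((ContinuousLinearMap.adjoint (Gn n)).comp ((Gn n).comp L))))
    (hΛG : ΛG = (α : ℂ) • (1 : U →L[ℂ] U) +
      ((ContinuousLinearMap.adjoint L).comp
        ((ContinuousLinearMap.adjoint G).comp (G.comp L))))
    (Λninv : ℕ → (U →L[ℂ] U)) (ΛGinv : U →L[ℂ] U)
    (hninv₂ : ∀ n : ℕ, (Λn n).comp (Λninv n) = 1)
    (hGinv₂ : ΛG.comp ΛGinv = 1)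
    (Pn : ℕ → (Y →L[ℂ] Y)) (P : Y →L[ℂ] Y)
    (hPn : ∀ n : ℕ, Pn n = ((ContinuousLinearMap.adjoint S).comp
      (((ContinuousLinearMap.adjoint (Gn n)).comp (Gn n)).comp
        ((1 : Y →L[ℂ] Y) - L.comp ((Λninv n).comp
          ((ContinuousLinearMap.adjoint L).comp
            ((ContinuousLinearMap.adjoint (Gn n)).comp (Gn n))))))).comp S)
    (hP : P = ((ContinuousLinearMap.adjoint S).comp
      (((ContinuousLinearMap.adjoint G).comp G).comp
        ((1 : Y →L[ℂ] Y) - L.comp (ΛGinv.comp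
          ((ContinuousLinearMap.adjoint L).comp
            ((ContinuousLinearMap.adjoint G).comp G)))))).comp S) :
    ∀ x : Y, Tendsto (fun n => (Pn n) x) atTop (𝓝 (P x)) := by
  have hGG : ∀ y, Tendsto (fun n => (adjoint (Gn n) ∘L Gn n) y) atTop (𝓝 ((adjoint G ∘L G) y)) :=
    tendsto_comp_apply_of_tendsto_pointwise hGnstar hGn
  have hΛ : ∀ u, Tendsto (fun n => Λn n u) atTop (𝓝 (ΛG u)) := fun u => by
    simp only [hΛn, hΛG, add_apply]
    exact tendsto_const_nhds.add <| tendsto_comp_apply_of_tendsto_pointwise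
      (fun _ => tendsto_const_nhds) (tendsto_comp_apply_of_tendsto_pointwise hGnstar
        (tendsto_comp_apply_of_tendsto_pointwise hGn fun _ => tendsto_const_nhds)) u
  have hΛbelow : ∀ n u, α * ‖u‖ ≤ ‖Λn n u‖ := fun n u => by
    rw [hΛn n, ← comp_assoc, ← adjoint_comp]
    exact mul_norm_le_norm_smul_one_add_adjoint_comp_self_apply α _ u
  have hΛinv : ∀ v, Tendsto (fun n => Λninv n v) atTop (𝓝 (ΛGinv v)) :=
    tendsto_rightInverse_apply_of_tendsto_pointwise hΛ hα hΛbelow hninv₂ hGinv₂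
  have hK : ∀ y, Tendsto (fun n => (L ∘L Λninv n ∘L adjoint L ∘L adjoint (Gn n) ∘L Gn n) y)
      atTop (𝓝 ((L ∘L ΛGinv ∘L adjoint L ∘L adjoint G ∘L G) y)) :=
    tendsto_comp_apply_of_tendsto_pointwise (fun _ => tendsto_const_nhds)
      (tendsto_comp_apply_of_tendsto_pointwise hΛinv
        (tendsto_comp_apply_of_tendsto_pointwise (fun _ => tendsto_const_nhds) hGG))
  simp only [hPn, hP]
  exact tendsto_comp_apply_of_tendsto_pointwise
    (tendsto_comp_apply_of_tendsto_pointwise (fun _ => tendsto_const_nhds)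
      (tendsto_comp_apply_of_tendsto_pointwise hGG fun y => tendsto_const_nhds.sub (hK y)))
    (fun _ => tendsto_const_nhds)

/-- If `G_n → G` and `G_n* → G*` strongly on `Y`, then the Riccati
(optimal cost) operators `P_n = S* G_n*G_n (I − L Λ_n⁻¹ L* G_n*G_n) S` converge
strongly to `P = S* G*G (I − L Λ_G⁻¹ L* G*G) S`, where `Λ_n = α·I + L*G_n*G_nL`
and `Λ_G = α·I + L*G*GL`. -/
theorem stmt18
    {U Y : Type*}
    [NormedAddCommGroup U] [InnerProductSpace ℂ U] [CompleteSpace U]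
    [NormedAddCommGroup Y] [InnerProductSpace ℂ Y] [CompleteSpace Y]
    (L : U →L[ℂ] Y) (S : Y →L[ℂ] Y) (α : ℝ) (hα : 0 < α)
    (G : Y →L[ℂ] Y) (Gn : ℕ → (Y →L[ℂ] Y))
    (hGn : ∀ y : Y, Tendsto (fun n => Gn n y) atTop (𝓝 (G y)))
    (hGnstar : ∀ y : Y, Tendsto
      (fun n => (ContinuousLinearMap.adjoint (Gn n)) y) atTop
      (𝓝 ((ContinuousLinearMap.adjoint G) y)))
    (Λn : ℕ → (U →L[ℂ] U)) (ΛG : U →L[ℂ] U)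
    (hΛn : ∀ n : ℕ, Λn n = (α : ℂ) • (1 : U →L[ℂ] U) +
      ((ContinuousLinearMap.adjoint L).comp
        ((ContinuousLinearMap.adjoint (Gn n)).comp ((Gn n).comp L))))
    (hΛG : ΛG = (α : ℂ) • (1 : U →L[ℂ] U) +
      ((ContinuousLinearMap.adjoint L).comp
        ((ContinuousLinearMap.adjoint G).comp (G.comp L))))
    (Λninv : ℕ → (U →L[ℂ] U)) (ΛGinv : U →L[ℂ] U)
    (hninv₁ : ∀ n : ℕ, (Λninv n).comp (Λn n) = 1)
    (hninv₂ : ∀ n : ℕ, (Λn n).comp (Λninv n) = 1)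
    (hGinv₁ : ΛGinv.comp ΛG = 1) (hGinv₂ : ΛG.comp ΛGinv = 1)
    (Pn : ℕ → (Y →L[ℂ] Y)) (P : Y →L[ℂ] Y)
    (hPn : ∀ n : ℕ, Pn n = ((ContinuousLinearMap.adjoint S).comp
      (((ContinuousLinearMap.adjoint (Gn n)).comp (Gn n)).comp
        ((1 : Y →L[ℂ] Y) - L.comp ((Λninv n).comp
          ((ContinuousLinearMap.adjoint L).comp
            ((ContinuousLinearMap.adjoint (Gn n)).comp (Gn n))))))).comp S)
    (hP : P = ((ContinuousLinearMap.adjoint S).comp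
      (((ContinuousLinearMap.adjoint G).comp G).comp
        ((1 : Y →L[ℂ] Y) - L.comp (ΛGinv.comp
          ((ContinuousLinearMap.adjoint L).comp
            ((ContinuousLinearMap.adjoint G).comp G)))))).comp S) :
    ∀ x : Y, Tendsto (fun n => (Pn n) x) atTop (𝓝 (P x)) :=
  stmt18_general L S α hα G Gn hGn hGnstar Λn ΛG hΛn hΛG Λninv ΛGinv hninv₂ hGinv₂ Pn P hPn hP
end
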